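/- Suppose Assumption 1 holds with β₀ = 0_p (so that U := Y₀ − X₀'β₀ = Y₀), and assume liminf_{x→∞} inf_{q ∈ S_p} x^c P(X₀'q > x) > 0 and limsup_{x→∞} x^d P(|U| > x) < ∞ for some d > c > 0. Then there exist K₂ > 0 and ε̄ ∈ (0, 1/2) such that for all ε ∈ (0, ε̄], d_H(B, B_ε) ≤ K₂ ε^{1/c − 1/d}, where d_H is the Hausdorff distance, B = {β ∈ ℝ^p : Y₀ ⪰cx X₀'β}, and B_ε = {λ q : q ∈ S_p, 0 ≤ λ ≤ S_ε(F_{Y₀}, F_{X₀'q})}. -/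

import Mathlib

/-! The heavier tail of `X₀'q` forces `B ⊆ {0}`: for `β ≠ 0` and the hinge `φ(x) = (x - a)⁺`,
Markov's inequality gives `E φ(X₀'β) ≳ a^(1-c)`, while the layer-cake formula gives
`E φ(Y₀) ≲ a^(1-d)`, so `Y₀ ⪰cx X₀'β` fails for large `a`. Hence `d_H(B, B_ε)` is at most the
radius of `B_ε`, i.e. `sup_q S_ε(F_{Y₀}, F_{X₀'q}) ≤ sup_q R(1 - ε, F_{Y₀}, F_{X₀'q})`. Near `t = 1`
the tail bounds become quantile bounds `F_{Y₀}⁻¹(t) ≲ (1-t)^(-1/d)` and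
`F_{X₀'q}⁻¹(t) ≳ (1-t)^(-1/c)`, uniformly in `q`, whose integrals over `[1 - ε, 1]` are of order
`ε^(1-1/d)` and `ε^(1-1/c)`. These integrals are finite because `E[(X₀'q)²] < ∞` forces `c ≥ 2`. -/

open MeasureTheory ProbabilityTheory Filter Set

noncomputable section

variable {Ω : Type*} [MeasurableSpace Ω]

/-- The centered version `A₀ = A - E[A]` of a real random variable. -/
def cent (μ : Measure Ω) (f : Ω → ℝ) : Ω → ℝ := fun ω => f ω - ∫ ω', f ω' ∂μ

/-- The centered version `X₀ = X - E[X]` of an `ℝ^p`-valued random vector. -/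
def centV {p : ℕ} (μ : Measure Ω) (X : Ω → EuclideanSpace ℝ (Fin p)) :
    Ω → EuclideanSpace ℝ (Fin p) := fun ω => X ω - ∫ ω', X ω' ∂μ

/-- Euclidean inner product `x'y`. -/
def dotp {p : ℕ} (x y : EuclideanSpace ℝ (Fin p)) : ℝ := ∑ i, x i * y i

/-- `A` dominates `B` in the convex order: for every convex `φ : ℝ → ℝ`,
`E[φ(B)] ≤ E[φ(A)]`, where both expectations are well defined in `(-∞, +∞]`
(any convex `φ` is bounded below by an affine function, so for a random variable
with finite mean the expectation is `+∞` exactly when `φ ∘ ·` is not integrable). -/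
def ConvexOrdGE (μ : Measure Ω) (A B : Ω → ℝ) : Prop :=
  ∀ φ : ℝ → ℝ, ConvexOn ℝ Set.univ φ →
    Integrable (fun ω => φ (A ω)) μ →
      Integrable (fun ω => φ (B ω)) μ ∧ ∫ ω, φ (B ω) ∂μ ≤ ∫ ω, φ (A ω) ∂μ

/-- The cumulative distribution function of a real random variable. -/
def cdfRV (μ : Measure Ω) (A : Ω → ℝ) : ℝ → ℝ := fun t => (μ {ω | A ω ≤ t}).toReal

/-- Generalized inverse (quantile function) `F⁻¹(t) = inf {x : t ≤ F x}` of a cdf. -/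
def qf (F : ℝ → ℝ) : ℝ → ℝ := fun t => sInf {x | t ≤ F x}

/-- The ratio of integrated quantiles `R(α, F, G)`. -/
def Rratio (α : ℝ) (F G : ℝ → ℝ) : ℝ := (∫ t in α..1, qf F t) / (∫ t in α..1, qf G t)

/-- `S(F, G) = inf_{α ∈ (0,1)} R(α, F, G)`. -/
def Sinf (F G : ℝ → ℝ) : ℝ := sInf {r | ∃ α ∈ Set.Ioo (0:ℝ) 1, r = Rratio α F G}

/-- `S_ε(F, G) = min_{α ∈ [ε, 1-ε]} R(α, F, G)`. -/
def Seps (ε : ℝ) (F G : ℝ → ℝ) : ℝ := sInf {r | ∃ α ∈ Set.Icc ε (1 - ε), r = Rratio α F G}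

/-- The covariance matrix `Var(X)` of an `ℝ^p`-valued random vector. -/
def covMatrix {p : ℕ} (μ : Measure Ω) (X : Ω → EuclideanSpace ℝ (Fin p)) :
    Matrix (Fin p) (Fin p) ℝ :=
  Matrix.of fun i j =>
    ∫ ω, (X ω i - ∫ ω', X ω' i ∂μ) * (X ω j - ∫ ω', X ω' j ∂μ) ∂μ

/-- The identified set `B = {β ∈ ℝ^p : Y₀ ⪰cx X₀'β}`. -/
def Bset {p : ℕ} (μ : Measure Ω) (Y : Ω → ℝ) (X : Ω → EuclideanSpace ℝ (Fin p)) :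
    Set (EuclideanSpace ℝ (Fin p)) :=
  {β | ConvexOrdGE μ (cent μ Y) (fun ω => dotp (centV μ X ω) β)}

/-- The regularized outer set `B_ε = {λ q : q ∈ S_p, 0 ≤ λ ≤ S_ε(F_{Y₀}, F_{X₀'q})}`. -/
def BepsSet {p : ℕ} (μ : Measure Ω) (Y : Ω → ℝ) (X : Ω → EuclideanSpace ℝ (Fin p)) (ε : ℝ) :
    Set (EuclideanSpace ℝ (Fin p)) :=
  {x | ∃ (q : EuclideanSpace ℝ (Fin p)) (l : ℝ), ‖q‖ = 1 ∧ 0 ≤ l ∧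
    l ≤ Seps ε (cdfRV μ (cent μ Y)) (cdfRV μ (fun ω => dotp (centV μ X ω) q)) ∧ x = l • q}

open Topology Real

section RealPowers

lemma mul_rpow_neg_le_iff {a m s x : ℝ} (hx : 0 < x) : a * x ^ (-s) ≤ m ↔ a ≤ x ^ s * m := by
  rw [rpow_neg hx.le, ← div_eq_mul_inv, div_le_iff₀ (rpow_pos_of_pos hx s), mul_comm]

lemma le_mul_rpow_neg_iff {C m s x : ℝ} (hx : 0 < x) : m ≤ C * x ^ (-s) ↔ x ^ s * m ≤ C := by
  rw [rpow_neg hx.le, ← div_eq_mul_inv, le_div_iff₀ (rpow_pos_of_pos hx s), mul_comm]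

lemma le_of_eventually_mul_rpow_neg_le {A B s t : ℝ} (hA : 0 < A)
    (h : ∀ᶠ x in atTop, A * x ^ (-s) ≤ B * x ^ (-t)) : t ≤ s := by
  by_contra! hst
  have hgrow : Tendsto (fun x : ℝ => A * x ^ (t - s)) atTop atTop :=
    (tendsto_rpow_atTop (sub_pos.2 hst)).const_mul_atTop hA
  obtain ⟨x, hx, hxB, hx0⟩ :=
    (h.and ((hgrow.eventually_gt_atTop B).and (eventually_gt_atTop 0))).exists
  have hAB : A * x ^ (t - s) ≤ B :=
    calc A * x ^ (t - s) = A * x ^ (-s) * x ^ t := by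
          rw [mul_assoc, ← rpow_add hx0, neg_add_eq_sub]
      _ ≤ B * x ^ (-t) * x ^ t := by gcongr
      _ = B := by rw [mul_assoc, ← rpow_add hx0, neg_add_cancel, rpow_zero, mul_one]
  linarith

lemma mul_rpow_neg_rpow_mul_rpow_neg {a u s : ℝ} (ha : 0 < a) (hu : 0 < u) (hs : s ≠ 0) :
    a * (a ^ (1 / s) * u ^ (-(1 / s))) ^ (-s) = u := by
  rw [mul_rpow (by positivity) (by positivity), ← rpow_mul ha.le, ← rpow_mul hu.le,
    show 1 / s * -s = -1 by field_simp, show -(1 / s) * -s = 1 by field_simp, rpow_neg_one,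
    rpow_one, ← mul_assoc, mul_inv_cancel₀ ha.ne', one_mul]

lemma tendsto_mul_one_sub_rpow_neg_nhdsLT_one {a r : ℝ} (ha : 0 < a) (hr : 0 < r) :
    Tendsto (fun t : ℝ => a * (1 - t) ^ (-r)) (𝓝[<] 1) atTop := by
  have hsub : Tendsto (fun t : ℝ => 1 - t) (𝓝[<] 1) (𝓝[>] 0) := by
    refine tendsto_nhdsWithin_iff.2 ⟨?_, eventually_mem_nhdsWithin.mono fun t ht =>
      mem_Ioi.2 (sub_pos.2 ht)⟩
    exact ((continuous_sub_left 1).tendsto' 1 0 (sub_self 1)).mono_left nhdsWithin_le_nhds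
  exact ((tendsto_rpow_neg_nhdsGT_zero (neg_lt_zero.2 hr)).comp hsub).const_mul_atTop ha

lemma intervalIntegrable_one_sub_rpow_neg {r : ℝ} (hr : r < 1) (a b : ℝ) :
    IntervalIntegrable (fun t : ℝ => (1 - t) ^ (-r)) volume a b := by
  simpa using (intervalIntegral.intervalIntegrable_rpow' (r := -r) (a := 1 - a) (b := 1 - b)
    (by linarith)).comp_sub_left 1

lemma integral_one_sub_rpow_neg {r : ℝ} (hr : r < 1) (ε : ℝ) :
    ∫ t in (1 - ε)..1, (1 - t) ^ (-r) = ε ^ (1 - r) / (1 - r) := by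
  rw [intervalIntegral.integral_comp_sub_left (fun u => u ^ (-r)), sub_self, sub_sub_cancel,
    integral_rpow (Or.inl (by linarith)), neg_add_eq_sub, zero_rpow (by linarith), sub_zero]

lemma setIntegral_Ioi_zero_comp_add_right (g : ℝ → ℝ) (a : ℝ) :
    ∫ t in Ioi 0, g (t + a) = ∫ u in Ioi a, g u := by
  simpa [preimage_add_const_Ioi] using
    (measurePreserving_add_right volume a).setIntegral_preimage_emb
      (measurableEmbedding_addRight a) g (Ioi a)

end RealPowers

lemma Metric.hausdorffDist_le_of_subset_singleton {α : Type*} [PseudoMetricSpace α]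
    {s t : Set α} {x : α} {r : ℝ} (hr : 0 ≤ r) (hs : s ⊆ {x}) (ht : t ⊆ closedBall x r) :
    hausdorffDist s t ≤ r := by
  rcases s.eq_empty_or_nonempty with rfl | ⟨y, hy⟩
  · rwa [hausdorffDist_empty']
  rcases t.eq_empty_or_nonempty with rfl | ⟨z, hz⟩
  · rwa [hausdorffDist_empty]
  refine hausdorffDist_le_of_mem_dist hr (fun y' hy' => ⟨z, hz, ?_⟩)
    (fun z' hz' => ⟨y, hy, ?_⟩)
  · rw [hs hy']
    exact mem_closedBall'.1 (ht hz)
  · rw [hs hy]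
    exact mem_closedBall.1 (ht hz')

section Quantiles

-- `0 ≤ x` covers the junk value `sInf = 0` of a set that is not bounded below.
lemma qf_le_of_le {F : ℝ → ℝ} {t x : ℝ} (hx : 0 ≤ x) (h : t ≤ F x) : qf F t ≤ x := by
  by_cases hb : BddBelow {y | t ≤ F y}
  · exact csInf_le hb h
  · rwa [qf, Real.sInf_of_not_bddBelow hb]

lemma Rratio_le_div {F G f g : ℝ → ℝ} {α N D : ℝ} (hα : α ≤ 1)
    (hf : IntervalIntegrable f volume α 1) (hg : IntervalIntegrable g volume α 1)
    (hFf : ∀ t ∈ Ioo α 1, qf F t ≤ f t) (hgG : ∀ t ∈ Ioo α 1, g t ≤ qf G t)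
    (hfN : ∫ t in α..1, f t ≤ N) (hN : 0 ≤ N) (hD : 0 < D) (hDg : D ≤ ∫ t in α..1, g t) :
    Rratio α F G ≤ N / D := by
  have hnum : ∫ t in α..1, qf F t ≤ N := by
    by_cases hF : IntervalIntegrable (qf F) volume α 1
    · exact (intervalIntegral.integral_mono_on_of_le_Ioo hα hF hf hFf).trans hfN
    · rwa [intervalIntegral.integral_undef hF]
  unfold Rratio
  by_cases hG : IntervalIntegrable (qf G) volume α 1
  · have hden : D ≤ ∫ t in α..1, qf G t :=
      hDg.trans (intervalIntegral.integral_mono_on_of_le_Ioo hα hg hG hgG)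
    exact (div_le_div_of_nonneg_right hnum (hD.trans_le hden).le).trans
      (div_le_div_of_nonneg_left hN hD hden)
  · rw [intervalIntegral.integral_undef hG, div_zero]
    positivity

lemma Seps_le_of_Rratio_le {F G : ℝ → ℝ} {ε α r : ℝ} (hα : α ∈ Icc ε (1 - ε)) (hr : 0 ≤ r)
    (h : Rratio α F G ≤ r) : Seps ε F G ≤ r := by
  by_cases hbdd : BddBelow {r | ∃ α ∈ Icc ε (1 - ε), r = Rratio α F G}
  · exact (csInf_le hbdd ⟨α, hα, rfl⟩).trans h
  · rwa [Seps, Real.sInf_of_not_bddBelow hbdd]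

lemma exists_Seps_le_of_qf_bounds {ι : Type*} {F : ℝ → ℝ} {G : ι → ℝ → ℝ} {A B c d : ℝ}
    (hA : 0 < A) (hB : 0 < B) (hc : 1 < c) (hcd : c < d)
    (hF : ∀ᶠ t in 𝓝[<] 1, qf F t ≤ A * (1 - t) ^ (-(1 / d)))
    (hG : ∀ᶠ t in 𝓝[<] 1, ∀ i, B * (1 - t) ^ (-(1 / c)) ≤ qf (G i) t) :
    ∃ K > (0 : ℝ), ∃ εb ∈ Ioo (0 : ℝ) (1 / 2), ∀ ε : ℝ, 0 < ε → ε ≤ εb → ∀ i,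
      Seps ε F (G i) ≤ K * ε ^ (1 / c - 1 / d) := by
  obtain ⟨l, hl1, hl⟩ := (nhdsLT_basis (1 : ℝ)).eventually_iff.1 (hF.and hG)
  have hc' : 1 / c < 1 := (div_lt_one (by linarith)).2 hc
  have hd' : 1 / d < 1 := (div_lt_one (by linarith)).2 (by linarith)
  set KN := A / (1 - 1 / d)
  set KD := B / (1 - 1 / c)
  have hKN : 0 < KN := div_pos hA (sub_pos.2 hd')
  have hKD : 0 < KD := div_pos hB (sub_pos.2 hc')
  refine ⟨KN / KD, div_pos hKN hKD, min (1 / 4) (1 - l),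
    ⟨lt_min (by norm_num) (sub_pos.2 hl1), (min_le_left _ _).trans_lt (by norm_num)⟩,
    fun ε hε hεb i => ?_⟩
  have hε4 : ε ≤ 1 / 4 := hεb.trans (min_le_left _ _)
  have hεl : ε ≤ 1 - l := hεb.trans (min_le_right _ _)
  have hnear : ∀ t ∈ Ioo (1 - ε) 1, t ∈ Ioo l 1 := fun t ht => ⟨by linarith [ht.1], ht.2⟩
  have hnum : ∫ t in (1 - ε)..1, A * (1 - t) ^ (-(1 / d)) = KN * ε ^ (1 - 1 / d) := by
    rw [intervalIntegral.integral_const_mul, integral_one_sub_rpow_neg hd']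
    ring
  have hden : ∫ t in (1 - ε)..1, B * (1 - t) ^ (-(1 / c)) = KD * ε ^ (1 - 1 / c) := by
    rw [intervalIntegral.integral_const_mul, integral_one_sub_rpow_neg hc']
    ring
  refine Seps_le_of_Rratio_le ⟨by linarith, le_rfl⟩ (by positivity) ?_
  calc Rratio (1 - ε) F (G i) ≤ KN * ε ^ (1 - 1 / d) / (KD * ε ^ (1 - 1 / c)) :=
        Rratio_le_div (by linarith) ((intervalIntegrable_one_sub_rpow_neg hd' _ _).const_mul A)
          ((intervalIntegrable_one_sub_rpow_neg hc' _ _).const_mul B)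
          (fun t ht => (hl (hnear t ht)).1) (fun t ht => (hl (hnear t ht)).2 i)
          hnum.le (by positivity) (by positivity) hden.ge
    _ = KN / KD * ε ^ (1 / c - 1 / d) := by
        rw [mul_div_mul_comm, ← rpow_sub hε]
        ring_nf

end Quantiles

section FiniteMeasure

variable (μ : Measure Ω) [IsFiniteMeasure μ]

lemma cdfRV_mono (Z : Ω → ℝ) : Monotone (cdfRV μ Z) := fun _ _ hxy =>
  ENNReal.toReal_mono (measure_ne_top μ _) (measure_mono fun _ h => le_trans h hxy)

lemma convexOn_hinge (a : ℝ) : ConvexOn ℝ univ (fun x : ℝ => max (x - a) 0) :=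
  ((convexOn_id convex_univ).sub (concaveOn_const a convex_univ)).sup
    (convexOn_const 0 convex_univ)

lemma two_le_of_mul_rpow_neg_le_tail {Z : Ω → ℝ} (hZ : MemLp Z 2 μ) {c₀ c : ℝ} (hc₀ : 0 < c₀)
    (htail : ∀ᶠ x in atTop, c₀ * x ^ (-c) ≤ (μ {ω | x < Z ω}).toReal) : 2 ≤ c := by
  refine le_of_eventually_mul_rpow_neg_le hc₀ (B := ∫ ω, Z ω ^ 2 ∂μ) ?_
  filter_upwards [htail, eventually_gt_atTop 0] with x hx hx0
  refine hx.trans ((le_mul_rpow_neg_iff hx0).2 ?_)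
  have hsq : {ω | x < Z ω} ⊆ {ω | x ^ (2 : ℝ) ≤ Z ω ^ 2} := fun ω (h : x < Z ω) => by
    rw [rpow_two]
    exact pow_le_pow_left₀ hx0.le h.le 2
  calc x ^ (2 : ℝ) * (μ {ω | x < Z ω}).toReal
      ≤ x ^ (2 : ℝ) * μ.real {ω | x ^ (2 : ℝ) ≤ Z ω ^ 2} := by
        gcongr
        exact measureReal_mono hsq
    _ ≤ ∫ ω, Z ω ^ 2 ∂μ :=
        mul_meas_ge_le_integral_of_nonneg (ae_of_all _ fun _ => sq_nonneg _) hZ.integrable_sq _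

lemma integral_hinge_le_of_tail_le {W : Ω → ℝ} (hW : Integrable W μ) {C d a : ℝ} (hd : 1 < d)
    (ha : 0 < a) (htail : ∀ x, a ≤ x → (μ {ω | x < W ω}).toReal ≤ C * x ^ (-d)) :
    ∫ ω, max (W ω - a) 0 ∂μ ≤ C / (d - 1) * a ^ (1 - d) := by
  have hint : Integrable (fun ω => max (W ω - a) 0) μ := (hW.sub (integrable_const a)).pos_part
  have hbound : IntegrableOn (fun t : ℝ => C * (t + a) ^ (-d)) (Ioi 0) :=
    (integrableOn_add_rpow_Ioi_of_lt (by linarith) (by linarith)).const_mul C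
  rw [hint.integral_eq_integral_meas_lt (ae_of_all _ fun _ => le_max_right _ _)]
  calc ∫ t in Ioi (0 : ℝ), μ.real {ω | t < max (W ω - a) 0}
      ≤ ∫ t in Ioi (0 : ℝ), C * (t + a) ^ (-d) := by
        refine integral_mono_of_nonneg (ae_of_all _ fun _ => measureReal_nonneg) hbound ?_
        refine (ae_restrict_iff' measurableSet_Ioi).2 (ae_of_all _ fun t (ht : 0 < t) => ?_)
        refine (measureReal_mono fun ω (h : t < max (W ω - a) 0) => ?_).trans
          (htail (t + a) (by linarith))
        show t + a < W ω
        rcases lt_max_iff.1 h with h | h <;> linarith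
    _ = C / (d - 1) * a ^ (1 - d) := by
        rw [integral_const_mul, setIntegral_Ioi_zero_comp_add_right (fun u => u ^ (-d)),
          integral_Ioi_rpow_of_lt (by linarith) ha, neg_add_eq_sub,
          show (1 : ℝ) - d = -(d - 1) by ring, div_neg, neg_div, neg_neg]
        ring

lemma not_convexOrdGE_of_tail_bounds {Y Z : Ω → ℝ} (hY : Integrable Y μ) {c₀ c C d : ℝ}
    (hc₀ : 0 < c₀) (hd : 1 < d) (hcd : c < d)
    (hZtail : ∀ᶠ x in atTop, c₀ * x ^ (-c) ≤ (μ {ω | x < Z ω}).toReal)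
    (hYtail : ∀ᶠ x in atTop, (μ {ω | x < Y ω}).toReal ≤ C * x ^ (-d)) :
    ¬ ConvexOrdGE μ Y Z := by
  intro hYZ
  obtain ⟨x₀, hx₀⟩ := eventually_atTop.1 hYtail
  suffices d - 1 ≤ c - 1 by linarith
  refine le_of_eventually_mul_rpow_neg_le (A := c₀ * 2 ^ (-c)) (B := C / (d - 1))
    (by positivity) ?_
  filter_upwards [(tendsto_id.const_mul_atTop two_pos).eventually hZtail,
    eventually_ge_atTop x₀, eventually_gt_atTop 0] with a (hZa : _ ≤ _) hax₀ ha
  obtain ⟨hZint, hle⟩ := hYZ _ (convexOn_hinge a) (hY.sub (integrable_const a)).pos_part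
  have hsub : {ω | 2 * a < Z ω} ⊆ {ω | a ≤ max (Z ω - a) 0} :=
    fun ω (h : 2 * a < Z ω) => le_max_of_le_left (show a ≤ Z ω - a by linarith)
  calc c₀ * 2 ^ (-c) * a ^ (-(c - 1)) = a * (c₀ * (2 * a) ^ (-c)) := by
        rw [mul_rpow zero_le_two ha.le, show -(c - 1) = 1 + -c by ring, rpow_add ha, rpow_one]
        ring
    _ ≤ a * μ.real {ω | a ≤ max (Z ω - a) 0} := by
        gcongr
        exact hZa.trans (measureReal_mono hsub)
    _ ≤ ∫ ω, max (Z ω - a) 0 ∂μ :=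
        mul_meas_ge_le_integral_of_nonneg (ae_of_all _ fun _ => le_max_right _ _) hZint a
    _ ≤ ∫ ω, max (Y ω - a) 0 ∂μ := hle
    _ ≤ C / (d - 1) * a ^ (1 - d) :=
        integral_hinge_le_of_tail_le μ hY hd ha fun x hx => hx₀ x (hax₀.trans hx)
    _ = C / (d - 1) * a ^ (-(d - 1)) := by rw [neg_sub]

end FiniteMeasure

section Probability

variable (μ : Measure Ω) [IsProbabilityMeasure μ]

lemma cdfRV_eq_one_sub_tail {Z : Ω → ℝ} (hZ : Measurable Z) (x : ℝ) :
    cdfRV μ Z x = 1 - (μ {ω | x < Z ω}).toReal := by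
  have hc : {ω | x < Z ω} = {ω | Z ω ≤ x}ᶜ := by ext ω; simp [not_le]
  have hs : MeasurableSet {ω | Z ω ≤ x} := hZ measurableSet_Iic
  rw [hc, prob_compl_eq_one_sub hs,
    ENNReal.toReal_sub_of_le prob_le_one ENNReal.one_ne_top, ENNReal.toReal_one, sub_sub_cancel,
    cdfRV]

lemma exists_le_cdfRV {Z : Ω → ℝ} (hZ : Measurable Z) {t : ℝ} (ht : t < 1) :
    ∃ x, t ≤ cdfRV μ Z x := by
  have : IsProbabilityMeasure (μ.map Z) := Measure.isProbabilityMeasure_map hZ.aemeasurable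
  have hcdf : cdfRV μ Z = cdf (μ.map Z) := by
    ext x
    rw [cdf_eq_real, measureReal_def, Measure.map_apply hZ measurableSet_Iic]
    rfl
  rw [hcdf]
  exact ((tendsto_cdf_atTop _).eventually (eventually_ge_nhds ht)).exists

lemma eventually_qf_cdfRV_le {Z : Ω → ℝ} (hZ : Measurable Z) {C d : ℝ} (hC : 0 < C)
    (hd : 0 < d) (htail : ∀ᶠ x in atTop, (μ {ω | x < Z ω}).toReal ≤ C * x ^ (-d)) :
    ∀ᶠ t in 𝓝[<] 1, qf (cdfRV μ Z) t ≤ C ^ (1 / d) * (1 - t) ^ (-(1 / d)) := by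
  have hlarge := (tendsto_mul_one_sub_rpow_neg_nhdsLT_one (r := 1 / d)
    (rpow_pos_of_pos hC (1 / d)) (by positivity)).eventually (htail.and (eventually_ge_atTop 0))
  filter_upwards [hlarge, self_mem_nhdsWithin] with t ⟨hxt, hx0⟩ ht
  refine qf_le_of_le hx0 ?_
  rw [cdfRV_eq_one_sub_tail μ hZ]
  linarith [mul_rpow_neg_rpow_mul_rpow_neg hC (sub_pos.2 ht) hd.ne']

lemma eventually_le_qf_cdfRV {ι : Type*} {Z : ι → Ω → ℝ} (hZ : ∀ i, Measurable (Z i))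
    {c₀ c : ℝ} (hc₀ : 0 < c₀) (hc : 0 < c)
    (htail : ∀ᶠ x in atTop, ∀ i, c₀ * x ^ (-c) ≤ (μ {ω | x < Z i ω}).toReal) :
    ∀ᶠ t in 𝓝[<] 1, ∀ i, c₀ ^ (1 / c) * (1 - t) ^ (-(1 / c)) ≤ qf (cdfRV μ (Z i)) t := by
  obtain ⟨x₁, hx₁⟩ := eventually_atTop.1 (htail.and (eventually_gt_atTop 0))
  have hlarge := (tendsto_mul_one_sub_rpow_neg_nhdsLT_one (r := 1 / c)
    (rpow_pos_of_pos hc₀ (1 / c)) (by positivity)).eventually_gt_atTop x₁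
  filter_upwards [hlarge, self_mem_nhdsWithin] with t hx₁t ht i
  set x := c₀ ^ (1 / c) * (1 - t) ^ (-(1 / c))
  have hx : c₀ * x ^ (-c) = 1 - t := mul_rpow_neg_rpow_mul_rpow_neg hc₀ (sub_pos.2 ht) hc.ne'
  refine le_csInf (exists_le_cdfRV μ (hZ i) ht) fun y hy => ?_
  by_contra! hyx
  -- the tail bound holds at `z = max y x₁ < x`, where it is strictly above `1 - t`
  obtain ⟨hz, hz0⟩ := hx₁ (max y x₁) (le_max_right _ _)
  have hlt : c₀ * x ^ (-c) < c₀ * (max y x₁) ^ (-c) :=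
    mul_lt_mul_of_pos_left (rpow_lt_rpow_of_neg hz0 (max_lt hyx hx₁t) (by linarith)) hc₀
  have hmono := cdfRV_mono μ (Z i) (le_max_left y x₁)
  rw [cdfRV_eq_one_sub_tail μ (hZ i) (max y x₁)] at hmono
  linarith [hz i, show t ≤ cdfRV μ (Z i) y from hy]

lemma exists_Seps_cdfRV_le {ι : Type*} {Y : Ω → ℝ} {Z : ι → Ω → ℝ} (hY : Measurable Y)
    (hZ : ∀ i, Measurable (Z i)) (hZ2 : ∀ i, MemLp (Z i) 2 μ) {c₀ c C d : ℝ} (hc₀ : 0 < c₀)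
    (hC : 0 < C) (hc : 0 < c) (hcd : c < d)
    (hYtail : ∀ᶠ x in atTop, (μ {ω | x < Y ω}).toReal ≤ C * x ^ (-d))
    (hZtail : ∀ᶠ x in atTop, ∀ i, c₀ * x ^ (-c) ≤ (μ {ω | x < Z i ω}).toReal) :
    ∃ K > (0 : ℝ), ∃ εb ∈ Ioo (0 : ℝ) (1 / 2), ∀ ε : ℝ, 0 < ε → ε ≤ εb → ∀ i,
      Seps ε (cdfRV μ Y) (cdfRV μ (Z i)) ≤ K * ε ^ (1 / c - 1 / d) := by
  cases isEmpty_or_nonempty ι with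
  | inl _ => exact ⟨1, one_pos, 1 / 4, ⟨by norm_num, by norm_num⟩, fun _ _ _ i => isEmptyElim i⟩
  | inr _ =>
    have hc2 : 2 ≤ c := two_le_of_mul_rpow_neg_le_tail μ (hZ2 (Classical.arbitrary ι)) hc₀
      (hZtail.mono fun _ h => h _)
    exact exists_Seps_le_of_qf_bounds (rpow_pos_of_pos hC _) (rpow_pos_of_pos hc₀ _)
      (by linarith) hcd (eventually_qf_cdfRV_le μ hY hC (by linarith) hYtail)
      (eventually_le_qf_cdfRV μ hZ hc₀ hc hZtail)

end Probability

section LinearModel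

variable {p : ℕ}

lemma dotp_eq_inner (x y : EuclideanSpace ℝ (Fin p)) : dotp x y = inner ℝ x y := by
  simp [dotp, PiLp.inner_apply, mul_comm]

lemma measurable_dotp_centV (μ : Measure Ω) {X : Ω → EuclideanSpace ℝ (Fin p)}
    (hX : Measurable X) (q : EuclideanSpace ℝ (Fin p)) :
    Measurable fun ω => dotp (centV μ X ω) q := by
  simp only [dotp_eq_inner]
  exact (hX.sub_const _).inner measurable_const

lemma memLp_dotp_centV (μ : Measure Ω) [IsFiniteMeasure μ]
    {X : Ω → EuclideanSpace ℝ (Fin p)} (hX : MemLp X 2 μ) (q : EuclideanSpace ℝ (Fin p)) :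
    MemLp (fun ω => dotp (centV μ X ω) q) 2 μ := by
  simp only [dotp_eq_inner]
  exact (hX.sub (memLp_const _)).inner_const q

lemma Bset_subset_singleton_zero (μ : Measure Ω) [IsFiniteMeasure μ] {Y : Ω → ℝ}
    {X : Ω → EuclideanSpace ℝ (Fin p)} (hY : Integrable Y μ) (hX : MemLp X 2 μ)
    {c₀ c C d : ℝ} (hc₀ : 0 < c₀) (hcd : c < d)
    (hXtail : ∀ᶠ x in atTop, ∀ q : {q : EuclideanSpace ℝ (Fin p) // ‖q‖ = 1},
      c₀ * x ^ (-c) ≤ (μ {ω | x < dotp (centV μ X ω) q}).toReal)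
    (hYtail : ∀ᶠ x in atTop, (μ {ω | x < cent μ Y ω}).toReal ≤ C * x ^ (-d)) :
    Bset μ Y X ⊆ {0} := by
  intro β hβ
  by_contra hβ0
  have hβpos : 0 < ‖β‖ := norm_pos_iff.2 hβ0
  set q : EuclideanSpace ℝ (Fin p) := ‖β‖⁻¹ • β
  have hdot : ∀ ω, dotp (centV μ X ω) β = ‖β‖ * dotp (centV μ X ω) q := by
    simp [q, dotp_eq_inner, inner_smul_right, hβpos.ne']
  have hqtail := hXtail.mono fun x hx => hx ⟨q, norm_smul_inv_norm hβ0⟩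
  have hc2 : 2 ≤ c := two_le_of_mul_rpow_neg_le_tail μ (memLp_dotp_centV μ hX q) hc₀ hqtail
  have hβtail : ∀ᶠ x in atTop,
      c₀ * ‖β‖ ^ c * x ^ (-c) ≤ (μ {ω | x < dotp (centV μ X ω) β}).toReal := by
    filter_upwards [(tendsto_id.atTop_div_const hβpos).eventually hqtail,
      eventually_gt_atTop 0] with x (hx : _ ≤ _) hx0
    have hset : {ω | x < dotp (centV μ X ω) β} = {ω | x / ‖β‖ < dotp (centV μ X ω) q} := by
      ext ω
      show x < _ ↔ x / ‖β‖ < _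
      rw [hdot, div_lt_iff₀' hβpos]
    rw [hset]
    refine le_of_eq_of_le ?_ hx
    show c₀ * ‖β‖ ^ c * x ^ (-c) = c₀ * (x / ‖β‖) ^ (-c)
    rw [div_rpow hx0.le hβpos.le, rpow_neg hβpos.le, div_inv_eq_mul]
    ring
  exact not_convexOrdGE_of_tail_bounds μ (hY.sub (integrable_const _)) (by positivity)
    (by linarith) hcd hβtail hYtail hβ

end LinearModel

theorem stmt13_general (μ : Measure Ω) [IsProbabilityMeasure μ] {p : ℕ}
    (Y : Ω → ℝ) (X : Ω → EuclideanSpace ℝ (Fin p))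
    (hYm : Measurable Y) (hXm : Measurable X)
    (hY2 : MemLp Y 2 μ) (hX2 : MemLp X 2 μ)
    (β₀ : EuclideanSpace ℝ (Fin p))
    (hβ₀ : β₀ = 0)
    (c d : ℝ) (hc : 0 < c) (hcd : c < d)
    (hXtail : ∃ c₀ > (0:ℝ), ∀ᶠ x : ℝ in atTop,
      ∀ q : EuclideanSpace ℝ (Fin p), ‖q‖ = 1 →
        c₀ ≤ x ^ c * (μ {ω | x < dotp (centV μ X ω) q}).toReal)
    (hUtail : ∃ C : ℝ, ∀ᶠ x : ℝ in atTop,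
      x ^ d * (μ {ω | x < |cent μ Y ω - dotp (centV μ X ω) β₀|}).toReal ≤ C) :
    ∃ K₂ > (0:ℝ), ∃ εb ∈ Set.Ioo (0:ℝ) (1/2), ∀ ε : ℝ, 0 < ε → ε ≤ εb →
      Metric.hausdorffDist (Bset μ Y X) (BepsSet μ Y X ε) ≤ K₂ * ε ^ (1/c - 1/d) := by
  subst hβ₀
  obtain ⟨c₀, hc₀, hXt⟩ := hXtail
  obtain ⟨C, hUt⟩ := hUtail
  simp only [dotp_eq_inner, inner_zero_right, sub_zero] at hUt
  have hXt' : ∀ᶠ x in atTop, ∀ q : {q : EuclideanSpace ℝ (Fin p) // ‖q‖ = 1},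
      c₀ * x ^ (-c) ≤ (μ {ω | x < dotp (centV μ X ω) q}).toReal := by
    filter_upwards [hXt, eventually_gt_atTop 0] with x hx hx0 q
    exact (mul_rpow_neg_le_iff hx0).2 (hx q q.2)
  have hYt : ∀ᶠ x in atTop, (μ {ω | x < cent μ Y ω}).toReal ≤ max C 1 * x ^ (-d) := by
    filter_upwards [hUt, eventually_gt_atTop 0] with x hx hx0
    exact (measureReal_mono fun ω (h : x < cent μ Y ω) => h.trans_le (le_abs_self _)).trans
      ((le_mul_rpow_neg_iff hx0).2 (hx.trans (le_max_left C 1)))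
  obtain ⟨K, hK, εb, hεb, hSeps⟩ := exists_Seps_cdfRV_le μ
    (Z := fun (q : {q : EuclideanSpace ℝ (Fin p) // ‖q‖ = 1}) ω => dotp (centV μ X ω) q)
    (hYm.sub_const _) (fun q => measurable_dotp_centV μ hXm q)
    (fun q => memLp_dotp_centV μ hX2 q) hc₀ (lt_max_of_lt_right one_pos) hc hcd hYt hXt'
  refine ⟨K, hK, εb, hεb, fun ε hε hεεb => Metric.hausdorffDist_le_of_subset_singleton
    (by positivity) (Bset_subset_singleton_zero μ (hY2.integrable one_le_two) hX2 hc₀ hcd hXt' hYt)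
    ?_⟩
  rintro _ ⟨q, l, hq, hl, hlS, rfl⟩
  rw [mem_closedBall_zero_iff, norm_smul, hq, mul_one, Real.norm_of_nonneg hl]
  exact hlS.trans (hSeps ε hε hεεb ⟨q, hq⟩)

/-- Under Assumption 1 with `β₀ = 0` (so `U = Y₀`), if the tails of
`X₀'q` are uniformly fat over unit directions `q` and the tails of `U` are thinner,
then `d_H(B, B_ε) ≤ K₂ ε^{1/c - 1/d}` for all `ε` small enough. -/
theorem stmt13 (μ : Measure Ω) [IsProbabilityMeasure μ] {p : ℕ}
    (Y : Ω → ℝ) (X : Ω → EuclideanSpace ℝ (Fin p))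
    (hYm : Measurable Y) (hXm : Measurable X)
    (hY2 : MemLp Y 2 μ) (hX2 : MemLp X 2 μ)
    (hVarY : 0 < variance Y μ) (hVarX : (covMatrix μ X).det ≠ 0)
    (α₀ : ℝ) (β₀ : EuclideanSpace ℝ (Fin p))
    (hmod : μ[Y | MeasurableSpace.comap X inferInstance]
      =ᵐ[μ] fun ω => α₀ + dotp (X ω) β₀)
    (hβ₀ : β₀ = 0)
    (c d : ℝ) (hc : 0 < c) (hcd : c < d)
    (hXtail : ∃ c₀ > (0:ℝ), ∀ᶠ x : ℝ in atTop,
      ∀ q : EuclideanSpace ℝ (Fin p), ‖q‖ = 1 →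
        c₀ ≤ x ^ c * (μ {ω | x < dotp (centV μ X ω) q}).toReal)
    (hUtail : ∃ C : ℝ, ∀ᶠ x : ℝ in atTop,
      x ^ d * (μ {ω | x < |cent μ Y ω - dotp (centV μ X ω) β₀|}).toReal ≤ C) :
    ∃ K₂ > (0:ℝ), ∃ εb ∈ Set.Ioo (0:ℝ) (1/2), ∀ ε : ℝ, 0 < ε → ε ≤ εb →
      Metric.hausdorffDist (Bset μ Y X) (BepsSet μ Y X ε) ≤ K₂ * ε ^ (1/c - 1/d) :=
  stmt13_general μ Y X hYm hXm hY2 hX2 β₀ hβ₀ c d hc hcd hXtail hUtail
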